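/- arXiv:2306.07977 — 9 statements merged into one kernel-verified Lean document; each statement's English description precedes it below -/
import Mathlib

section
/- Let P be a primal on a nonempty set X. Then the relation ↪ on the power set of X defined by A ↪ B if and only if Aᶜ ∈ P and Bᶜ ∈ P is a primal-proximity on X, i.e., it satisfies all five primal-proximity axioms with respect to P. -/
open Set

/-- A collection `P` of subsets of `X` is a *primal* on `X`. -/
def IsPrimalOn {X : Type*} (P : Set (Set X)) : Prop :=
  (Set.univ : Set X) ∉ P ∧
  (∀ A B : Set X, A ∈ P → B ⊆ A → B ∈ P) ∧
  (∀ A B : Set X, A ∩ B ∈ P → A ∈ P ∨ B ∈ P)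

/-- A binary relation `r` on the power set of `X` is a *primal-proximity* with
respect to a primal `P` on `X`. -/
def IsPrimalProximity {X : Type*} (P : Set (Set X)) (r : Set X → Set X → Prop) : Prop :=
  (∀ A B : Set X, r A B → r B A) ∧
  (∀ A B C : Set X, r A (B ∪ C) ↔ (r A B ∨ r A C)) ∧
  (∀ A : Set X, Aᶜ ∉ P → ∀ B : Set X, ¬ r A B) ∧
  (∀ A B : Set X, (A ∩ B)ᶜ ∈ P → r A B) ∧
  (∀ A B : Set X, ¬ r A B →
    ∃ C D : Set X, ¬ r A Cᶜ ∧ ¬ r Dᶜ B ∧ (C ∩ D)ᶜ ∉ P)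

/-- The point-primal proximity of `A`: `A^↪ = {x | {x} ↪ A}`. -/
def ppp {X : Type*} (r : Set X → Set X → Prop) (A : Set X) : Set X :=
  {x : X | r {x} A}
namespace IsPrimalOn

variable {X : Type*} {P : Set (Set X)}

theorem mem_of_subset (hP : IsPrimalOn P) {A B : Set X} (hA : A ∈ P) (hBA : B ⊆ A) : B ∈ P :=
  hP.2.1 A B hA hBA

theorem inter_mem_iff (hP : IsPrimalOn P) {A B : Set X} : A ∩ B ∈ P ↔ A ∈ P ∨ B ∈ P :=
  ⟨hP.2.2 A B, fun h => h.elim (hP.mem_of_subset · inter_subset_left)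
    (hP.mem_of_subset · inter_subset_right)⟩

theorem compl_compl_univ_notMem (hP : IsPrimalOn P) : (univ : Set X)ᶜᶜ ∉ P := by
  simpa using hP.1

end IsPrimalOn

theorem stmt_0_general {X : Type*} (P : Set (Set X)) (hP : IsPrimalOn P) :
    IsPrimalProximity P (fun A B : Set X => Aᶜ ∈ P ∧ Bᶜ ∈ P) := by
  refine ⟨fun A B h => h.symm, fun A B C => ?_, fun A hA B h => hA h.1, fun A B h => ?_,
    fun A B h => ?_⟩
  · beta_reduce
    rw [compl_union, hP.inter_mem_iff, and_or_left]
  · beta_reduce at h ⊢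
    rw [compl_inter] at h
    exact ⟨hP.mem_of_subset h subset_union_left, hP.mem_of_subset h subset_union_right⟩
  · -- The witnesses `C, D` are `∅` and `univ`, ordered by which of `Aᶜ, Bᶜ` lies outside `P`.
    rcases not_and_or.mp h with hA | hB
    · exact ⟨∅, univ, fun h => hA h.1, fun h => hP.compl_compl_univ_notMem h.1,
        by simpa using hP.1⟩
    · exact ⟨univ, ∅, fun h => hP.compl_compl_univ_notMem h.2, fun h => hB h.2,
        by simpa using hP.1⟩

theorem stmt_0 {X : Type*} [Nonempty X] (P : Set (Set X)) (hP : IsPrimalOn P) :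
    IsPrimalProximity P (fun A B : Set X => Aᶜ ∈ P ∧ Bᶜ ∈ P) :=
  stmt_0_general P hP
end

section
/- Let P be a primal on a nonempty set X. Then the relation ↪ on the power set of X defined by A ↪ B if and only if (A ∩ B)ᶜ ∈ P is a primal-proximity on X, i.e., it satisfies all five primal-proximity axioms with respect to P. -/
open Set

namespace IsPrimalOn

variable {X : Type*} {P : Set (Set X)}

theorem univ_notMem (hP : IsPrimalOn P) : (univ : Set X) ∉ P := hP.1

end IsPrimalOn

theorem stmt_1_general {X : Type*} (P : Set (Set X)) (hP : IsPrimalOn P) :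
    IsPrimalProximity P (fun A B : Set X => (A ∩ B)ᶜ ∈ P) := by
  refine ⟨fun A B h => ?_, fun A B C => ?_, fun A hA B h => ?_, fun A B h => h, fun A B h => ?_⟩ <;>
    beta_reduce at *
  · rwa [inter_comm]
  · rw [inter_union_distrib_left, compl_union, hP.inter_mem_iff]
  · exact hA (hP.mem_of_subset h (compl_subset_compl.mpr inter_subset_left))
  · -- with `C = Bᶜ`, `D = B` both remaining conditions say `univ ∉ P`
    refine ⟨Bᶜ, B, by rwa [compl_compl], ?_, ?_⟩ <;>
      simpa only [compl_inter_self, inter_self, compl_empty] using hP.univ_notMem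

theorem stmt_1 {X : Type*} [Nonempty X] (P : Set (Set X)) (hP : IsPrimalOn P) :
    IsPrimalProximity P (fun A B : Set X => (A ∩ B)ᶜ ∈ P) :=
  stmt_1_general P hP
end

section
/- Let X be a nonempty normal topological space and let P = {A ⊆ X : A ≠ X} (which is a primal on X). Then the relation ↪ on the power set of X defined by A ↪ B if and only if (cl(A) ∩ cl(B))ᶜ ∈ P (equivalently, cl(A) ∩ cl(B) ≠ ∅), where cl denotes topological closure, is a primal-proximity on X, i.e., it satisfies all five primal-proximity axioms with respect to P. -/
/-!
The relation says that `closure A` and `closure B` meet. Symmetry, additivity and the two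
conditions tying it to the primal are elementary facts about closures. The last axiom is normality:
separate `closure A ⊆ U` and `closure B ⊆ V` by disjoint open sets and take `C = U`, `D = V`.
Then `closure Uᶜ = Uᶜ` misses `closure A`, and `U ∩ V = ∅`.
-/

open Set

theorem compl_inter_ne_univ_iff_not_disjoint {X : Type*} {s t : Set X} :
    (s ∩ t)ᶜ ≠ univ ↔ ¬Disjoint s t := by
  rw [compl_ne_univ, not_disjoint_iff_nonempty_inter]

theorem disjoint_closure_closure_compl {X : Type*} [TopologicalSpace X] {s U : Set X}
    (hU : IsOpen U) (hsU : closure s ⊆ U) : Disjoint (closure s) (closure Uᶜ) := by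
  rwa [hU.isClosed_compl.closure_eq, disjoint_compl_right_iff_subset]

theorem isPrimalProximity_not_disjoint_closure {X : Type*} [TopologicalSpace X] [NormalSpace X] :
    IsPrimalProximity {A : Set X | A ≠ univ} (fun A B => ¬Disjoint (closure A) (closure B)) := by
  refine ⟨fun _ _ h h' => h h'.symm, fun A B C => ?_, fun A hA B => ?_,
    fun A B hAB => ?_, fun A B hAB => ?_⟩
  · simp only [closure_union, disjoint_union_right, not_and_or]
  · obtain rfl : A = ∅ := compl_univ_iff.mp (not_not.mp hA)
    simp
  · exact fun h => compl_inter_ne_univ_iff_not_disjoint.mp hAB (h.mono subset_closure subset_closure)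
  · obtain ⟨U, V, hU, hV, hAU, hBV, hUV⟩ :=
      normal_separation isClosed_closure isClosed_closure (not_not.mp hAB)
    refine ⟨U, V, not_not.mpr (disjoint_closure_closure_compl hU hAU),
      not_not.mpr (disjoint_closure_closure_compl hV hBV).symm, ?_⟩
    exact not_not.mpr (compl_univ_iff.mpr hUV.inter_eq)

theorem stmt_2_general {X : Type*} [TopologicalSpace X] [NormalSpace X] :
    IsPrimalProximity {A : Set X | A ≠ Set.univ}
      (fun A B : Set X => (closure A ∩ closure B)ᶜ ∈ {A : Set X | A ≠ Set.univ}) := by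
  simpa only [mem_ofPred_eq, compl_inter_ne_univ_iff_not_disjoint] using
    isPrimalProximity_not_disjoint_closure

theorem stmt_2 {X : Type*} [Nonempty X] [TopologicalSpace X] [NormalSpace X] :
    IsPrimalProximity {A : Set X | A ≠ Set.univ}
      (fun A B : Set X => (closure A ∩ closure B)ᶜ ∈ {A : Set X | A ≠ Set.univ}) :=
  stmt_2_general
end

section
/- Let (X, ↪, P) be a primal-proximity space and A, B ⊆ X. If B ̸↪ A, then B ̸↪ A^↪, where A^↪ := {x ∈ X : {x} ↪ A}. -/
open Set

/-! Separating `B` from `A` by axiom (5) gives `C`, `D` with `B` far from `Cᶜ`, `Dᶜ` far from `A`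
and `(C ∩ D)ᶜ ∉ P`. Every point near `A` lies in `D` (else `Dᶜ` would be near `A`) and not in `C`
(a point of `C ∩ D` is far from everything by axiom (3)), so `A^↪ ⊆ Cᶜ` and `B` is far from it. -/

namespace IsPrimalProximity

variable {X : Type*} {P : Set (Set X)} {r : Set X → Set X → Prop}

theorem symm (hr : IsPrimalProximity P r) {A B : Set X} (hAB : r A B) : r B A :=
  hr.1 A B hAB

theorem mono_right (hr : IsPrimalProximity P r) {A B C : Set X} (hBC : B ⊆ C) (hAB : r A B) :
    r A C := by
  simpa only [union_eq_self_of_subset_left hBC] using (hr.2.1 A B C).2 (Or.inl hAB)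

theorem mono_left (hr : IsPrimalProximity P r) {A B C : Set X} (hAC : A ⊆ C) (hAB : r A B) :
    r C B :=
  hr.symm (hr.mono_right hAC (hr.symm hAB))

theorem not_singleton_of_compl_notMem (hP : IsPrimalOn P) (hr : IsPrimalProximity P r)
    {S : Set X} (hS : Sᶜ ∉ P) {x : X} (hx : x ∈ S) (B : Set X) : ¬ r {x} B := by
  refine hr.2.2.1 {x} (fun hx' => hS ?_) B
  exact hP.2.1 _ _ hx' (compl_subset_compl.2 (singleton_subset_iff.2 hx))

theorem ppp_subset_compl (hP : IsPrimalOn P) (hr : IsPrimalProximity P r) {A C D : Set X}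
    (hDA : ¬ r Dᶜ A) (hCD : (C ∩ D)ᶜ ∉ P) : ppp r A ⊆ Cᶜ := by
  intro x (hxA : r {x} A) hxC
  have hxD : x ∈ D := by
    by_contra hxD
    exact hDA (hr.mono_left (singleton_subset_iff.2 hxD) hxA)
  exact hr.not_singleton_of_compl_notMem hP hCD ⟨hxC, hxD⟩ A hxA

end IsPrimalProximity

theorem stmt_5_general {X : Type*} (P : Set (Set X)) (r : Set X → Set X → Prop)
    (hP : IsPrimalOn P) (hr : IsPrimalProximity P r)
    (A B : Set X) (h : ¬ r B A) :
    ¬ r B (ppp r A) := by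
  obtain ⟨C, D, hBC, hDA, hCD⟩ := hr.2.2.2.2 B A h
  exact fun hBA => hBC (hr.mono_right (hr.ppp_subset_compl hP hDA hCD) hBA)

theorem stmt_5 {X : Type*} [Nonempty X] (P : Set (Set X)) (r : Set X → Set X → Prop)
    (hP : IsPrimalOn P) (hr : IsPrimalProximity P r)
    (A B : Set X) (h : ¬ r B A) :
    ¬ r B (ppp r A) :=
  stmt_5_general P r hP hr A B h
end

section
/- Let (X, ↪, P) be a primal-proximity space and A, B ⊆ X. Then: (1) if Bᶜ ∉ P, then (A ∪ B)^↪ = A^↪ = (A \ B)^↪; (2) if ((A \ B) ∪ (B \ A))ᶜ ∉ P, then A^↪ = B^↪; where A^↪ := {x ∈ X : {x} ↪ A}. -/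
/-! A set `B` with `Bᶜ ∉ P` is near no set at all (symmetry and axiom (3)), so by additivity of
`↪` adjoining it to a set, or removing it, leaves the point-primal proximity unchanged. For (2),
adjoining the symmetric difference turns both `A` and `B` into `A ∪ B`. -/

open Set

namespace IsPrimalOn

variable {X : Type*} {P : Set (Set X)}

theorem compl_notMem_of_subset (hP : IsPrimalOn P) {B C : Set X} (hB : Bᶜ ∉ P) (hCB : C ⊆ B) :
    Cᶜ ∉ P :=
  fun hC => hB (hP.2.1 _ _ hC (compl_subset_compl.mpr hCB))

end IsPrimalOn

namespace IsPrimalProximity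

variable {X : Type*} {P : Set (Set X)} {r : Set X → Set X → Prop}

theorem ppp_union (hr : IsPrimalProximity P r) (A B : Set X) :
    ppp r (A ∪ B) = ppp r A ∪ ppp r B :=
  ext fun _ => hr.2.1 _ _ _

theorem ppp_eq_empty_of_compl_notMem (hr : IsPrimalProximity P r) {B : Set X} (hB : Bᶜ ∉ P) :
    ppp r B = ∅ :=
  eq_empty_of_forall_notMem fun _ hx => hr.2.2.1 B hB _ (hr.1 _ _ hx)

theorem ppp_union_of_compl_notMem (hr : IsPrimalProximity P r) (A : Set X) {B : Set X}
    (hB : Bᶜ ∉ P) : ppp r (A ∪ B) = ppp r A := by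
  rw [hr.ppp_union, hr.ppp_eq_empty_of_compl_notMem hB, union_empty]

end IsPrimalProximity

theorem stmt_9_general {X : Type*} (P : Set (Set X)) (r : Set X → Set X → Prop)
    (hP : IsPrimalOn P) (hr : IsPrimalProximity P r) (A B : Set X) :
    (Bᶜ ∉ P → ppp r (A ∪ B) = ppp r A ∧ ppp r A = ppp r (A \ B)) ∧
    (((A \ B) ∪ (B \ A))ᶜ ∉ P → ppp r A = ppp r B) := by
  refine ⟨fun hB => ⟨hr.ppp_union_of_compl_notMem A hB, ?_⟩, fun hAB => ?_⟩
  · have hinter : (A ∩ B)ᶜ ∉ P := hP.compl_notMem_of_subset hB inter_subset_right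
    rw [← hr.ppp_union_of_compl_notMem (A \ B) hinter, sdiff_union_inter]
  · have hA : A ∪ (A \ B ∪ B \ A) = A ∪ B := by ext; simp only [mem_union, mem_sdiff]; tauto
    have hB : B ∪ (A \ B ∪ B \ A) = A ∪ B := by ext; simp only [mem_union, mem_sdiff]; tauto
    rw [← hr.ppp_union_of_compl_notMem A hAB, ← hr.ppp_union_of_compl_notMem B hAB, hA, hB]

theorem stmt_9 {X : Type*} [Nonempty X] (P : Set (Set X)) (r : Set X → Set X → Prop)
    (hP : IsPrimalOn P) (hr : IsPrimalProximity P r) (A B : Set X) :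
    (Bᶜ ∉ P → ppp r (A ∪ B) = ppp r A ∧ ppp r A = ppp r (A \ B)) ∧
    (((A \ B) ∪ (B \ A))ᶜ ∉ P → ppp r A = ppp r B) :=
  stmt_9_general P r hP hr A B
end

section
/- Let (X, ↪, P) be a primal-proximity space. Then: (1) for all A, B ⊆ X, if Aᶜ ∉ P then A ∩ B^↪ = ∅; (2) ({x} ↪ X for every x ∈ X) if and only if P = {A ⊆ X : A ≠ X}; (3) if P = {A ⊆ X : A ≠ X} then X^↪ = X; where A^↪ := {x ∈ X : {x} ↪ A}. -/
open Set

namespace IsPrimalProximity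

variable {X : Type*} {P : Set (Set X)} {r : Set X → Set X → Prop}

theorem not_rel_of_compl_notMem (hr : IsPrimalProximity P r) {A : Set X} (hA : Aᶜ ∉ P)
    (B : Set X) : ¬ r A B :=
  hr.2.2.1 A hA B

theorem rel_of_compl_inter_mem (hr : IsPrimalProximity P r) {A B : Set X}
    (h : (A ∩ B)ᶜ ∈ P) : r A B :=
  hr.2.2.2.1 A B h

theorem not_rel_singleton_of_mem (hr : IsPrimalProximity P r) (hP : IsPrimalOn P) {A : Set X}
    (hA : Aᶜ ∉ P) {x : X} (hx : x ∈ A) (B : Set X) : ¬ r {x} B :=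
  hr.not_rel_of_compl_notMem
    (fun hxP => hA (hP.mem_of_subset hxP (compl_subset_compl.2 (singleton_subset_iff.2 hx)))) B

theorem inter_ppp_eq_empty (hr : IsPrimalProximity P r) (hP : IsPrimalOn P) {A : Set X}
    (hA : Aᶜ ∉ P) (B : Set X) : A ∩ ppp r B = ∅ :=
  eq_empty_of_forall_notMem fun _ ⟨hxA, hxB⟩ => hr.not_rel_singleton_of_mem hP hA hxA B hxB

theorem rel_singleton_univ (hr : IsPrimalProximity P r) (hPeq : P = {A : Set X | A ≠ univ})
    (x : X) : r {x} univ :=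
  hr.rel_of_compl_inter_mem <| by
    rw [hPeq, inter_univ]
    exact compl_ne_univ.2 (singleton_nonempty x)

theorem eq_setOf_ne_univ (hr : IsPrimalProximity P r) (hP : IsPrimalOn P)
    (h : ∀ x : X, r {x} univ) : P = {A : Set X | A ≠ univ} := by
  ext A
  refine ⟨fun hA hAu => hP.univ_notMem (hAu ▸ hA), fun hA => ?_⟩
  obtain ⟨x, hx⟩ := (ne_univ_iff_exists_notMem A).1 hA
  by_contra hAP
  exact hr.not_rel_singleton_of_mem hP (by rwa [compl_compl]) (mem_compl hx) univ (h x)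

end IsPrimalProximity

theorem stmt_10_general {X : Type*} (P : Set (Set X)) (r : Set X → Set X → Prop)
    (hP : IsPrimalOn P) (hr : IsPrimalProximity P r) :
    (∀ A B : Set X, Aᶜ ∉ P → A ∩ ppp r B = ∅) ∧
    ((∀ x : X, r {x} Set.univ) ↔ P = {A : Set X | A ≠ Set.univ}) ∧
    (P = {A : Set X | A ≠ Set.univ} → ppp r Set.univ = Set.univ) :=
  ⟨fun _ B hA => hr.inter_ppp_eq_empty hP hA B,
    ⟨hr.eq_setOf_ne_univ hP, hr.rel_singleton_univ⟩,
    fun hPeq => eq_univ_of_forall (hr.rel_singleton_univ hPeq)⟩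

theorem stmt_10 {X : Type*} [Nonempty X] (P : Set (Set X)) (r : Set X → Set X → Prop)
    (hP : IsPrimalOn P) (hr : IsPrimalProximity P r) :
    (∀ A B : Set X, Aᶜ ∉ P → A ∩ ppp r B = ∅) ∧
    ((∀ x : X, r {x} Set.univ) ↔ P = {A : Set X | A ≠ Set.univ}) ∧
    (P = {A : Set X | A ≠ Set.univ} → ppp r Set.univ = Set.univ) :=
  stmt_10_general P r hP hr
end

section
/- Let (X, ↪, P) be a primal-proximity space, A, B ⊆ X, and x ∈ X. If A ↪ {x} and {x} ↪ B, then A ↪ B. -/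
open Set

theorem stmt_13 {X : Type*} [Nonempty X] (P : Set (Set X)) (r : Set X → Set X → Prop)
    (hP : IsPrimalOn P) (hr : IsPrimalProximity P r)
    (A B : Set X) (x : X) (h1 : r A {x}) (h2 : r {x} B) :
    r A B := by
  obtain ⟨hsym, hunion, hax3, hax4, hax5⟩ := hr
  obtain ⟨_, hdown, _⟩ := hP
  -- monotonicity
  have mono : ∀ (S T T' : Set X), r S T → T ⊆ T' → r S T' := by
    intro S T T' h hsub
    have : T ∪ T' = T' := union_eq_self_of_subset_left hsub
    have := (hunion S T T').mpr (Or.inl h)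
    rwa [union_eq_self_of_subset_left hsub] at this
  by_contra hAB
  obtain ⟨C, D, hAC, hDB, hCD⟩ := hax5 A B hAB
  have hx : x ∉ C ∩ D := by
    intro hx
    have hsub : (C ∩ D)ᶜ ⊆ ({x} : Set X)ᶜ := by
      apply compl_subset_compl.mpr
      simpa [singleton_subset_iff] using hx
    have hxP : ({x} : Set X)ᶜ ∉ P := fun hmem => hCD (hdown _ _ hmem hsub)
    exact hax3 {x} hxP B h2
  rcases (by by_contra hc; push_neg at hc; exact hx ⟨hc.1, hc.2⟩ : x ∉ C ∨ x ∉ D) with hxC | hxD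
  · exact hAC (mono A {x} Cᶜ h1 (singleton_subset_iff.mpr hxC))
  · exact hDB (hsym B Dᶜ (mono B {x} Dᶜ (hsym _ _ h2) (singleton_subset_iff.mpr hxD)))
end

section
/- Let (X, ↪, P) be a primal-proximity space. Then there exists a topology on X whose closed sets are exactly the proximity-closed subsets of X, i.e., the collection of complements of proximity-closed sets forms a topology on X. -/
open Set

/-!
The operator `A ↦ A^↪` sends `∅` to `∅` (axiom (3), as `∅ᶜ = X ∉ P`), is monotone and
preserves binary unions (axiom (2)). Hence the proximity-closed sets `F`, i.e. those with
`F^↪ ⊆ F`, contain `∅` and are stable under finite unions and arbitrary intersections: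
they are the closed sets of a topology.
-/

namespace IsPrimalProximity

variable {X : Type*} {P : Set (Set X)} {r : Set X → Set X → Prop}

theorem rel_mono (hr : IsPrimalProximity P r) {A B C : Set X} (h : r A B) (hBC : B ⊆ C) :
    r A C := by
  rw [← union_eq_self_of_subset_left hBC]
  exact (hr.2.1 A B C).mpr (Or.inl h)

theorem not_rel_empty (hr : IsPrimalProximity P r) (hP : IsPrimalOn P) (A : Set X) :
    ¬ r A ∅ := fun h =>
  hr.2.2.1 ∅ (by simpa using hP.1) A (hr.1 A ∅ h)

theorem ppp_empty (hr : IsPrimalProximity P r) (hP : IsPrimalOn P) : ppp r ∅ = ∅ :=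
  eq_empty_of_forall_notMem fun x => hr.not_rel_empty hP {x}

theorem ppp_mono (hr : IsPrimalProximity P r) {A B : Set X} (hAB : A ⊆ B) :
    ppp r A ⊆ ppp r B := fun _ hx => hr.rel_mono hx hAB

abbrev topology (hr : IsPrimalProximity P r) (hP : IsPrimalOn P) : TopologicalSpace X :=
  .ofClosed {F | ppp r F ⊆ F}
    (by simp [hr.ppp_empty hP])
    (fun _ hS => subset_sInter fun F hF =>
      (hr.ppp_mono (sInter_subset_of_mem hF)).trans (hS hF))
    (fun A hA B hB => (hr.ppp_union A B).trans_subset (union_subset_union hA hB))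

theorem isClosed_topology_iff (hr : IsPrimalProximity P r) (hP : IsPrimalOn P) (F : Set X) :
    @IsClosed X (hr.topology hP) F ↔ ppp r F ⊆ F := by
  rw [← @isOpen_compl_iff X F (hr.topology hP)]
  change ppp r Fᶜᶜ ⊆ Fᶜᶜ ↔ _
  rw [compl_compl]

end IsPrimalProximity

theorem stmt_14_general {X : Type*} (P : Set (Set X)) (r : Set X → Set X → Prop)
    (hP : IsPrimalOn P) (hr : IsPrimalProximity P r) :
    ∃ T : TopologicalSpace X,
      ∀ F : Set X, @IsClosed X T F ↔ (∀ x : X, r {x} F → x ∈ F) :=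
  ⟨hr.topology hP, hr.isClosed_topology_iff hP⟩

theorem stmt_14 {X : Type*} [Nonempty X] (P : Set (Set X)) (r : Set X → Set X → Prop)
    (hP : IsPrimalOn P) (hr : IsPrimalProximity P r) :
    ∃ T : TopologicalSpace X,
      ∀ F : Set X, @IsClosed X T F ↔ (∀ x : X, r {x} F → x ∈ F) :=
  stmt_14_general P r hP hr
end

section
/- Let (X, ↪, P) be a primal-proximity space and define cl*(A) := A ∪ A^↪, where A^↪ := {x ∈ X : {x} ↪ A}. Then for all A, B ⊆ X: (1) B ̸↪ A if and only if B ̸↪ cl*(A); (2) cl*(A^↪) = A^↪; (3) cl*(A^↪) = (cl*(A))^↪. -/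
/-! The heart of the matter is that `B ̸↪ A` already forces `B ̸↪ A^↪`: axiom (5) separates `B`
and `A` by sets `C`, `D` with `B ̸↪ Cᶜ` and `Dᶜ ̸↪ A`; every point proximal to `A` lies in `D`,
so `A^↪ ⊆ (C ∩ D) ∪ Cᶜ`, and `C ∩ D` is far from everything by axiom (3). Hence adding `A^↪`
to `A` changes no proximity, and all three identities follow. -/

open Set

namespace IsPrimalProximity

variable {X : Type*} {P : Set (Set X)} {r : Set X → Set X → Prop}
  (hr : IsPrimalProximity P r)
include hr

theorem mono_right_s18 {A A' B : Set X} (h : r B A') (hA : A' ⊆ A) : r B A := by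
  rw [← union_eq_self_of_subset_left hA]
  exact (hr.2.1 B A' A).2 (Or.inl h)

theorem mono_left_s18 {A B B' : Set X} (h : r B' A) (hB : B' ⊆ B) : r B A :=
  hr.1 _ _ (hr.mono_right_s18 (hr.1 _ _ h) hB)

theorem ppp_subset_of_not_rel_compl {A D : Set X} (h : ¬ r Dᶜ A) : ppp r A ⊆ D := by
  intro x hx
  by_contra hxD
  exact h (hr.mono_left_s18 hx (singleton_subset_iff.2 hxD))

theorem not_rel_ppp_of_not_rel {A B : Set X} (h : ¬ r B A) : ¬ r B (ppp r A) := by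
  obtain ⟨C, D, hBC, hDA, hCD⟩ := hr.2.2.2.2 B A h
  have hfar : ¬ r B (C ∩ D) := fun hBCD => hr.2.2.1 _ hCD B (hr.1 _ _ hBCD)
  have hcover : ppp r A ⊆ (C ∩ D) ∪ Cᶜ := fun x hx => by
    by_cases hxC : x ∈ C
    · exact Or.inl ⟨hxC, hr.ppp_subset_of_not_rel_compl hDA hx⟩
    · exact Or.inr hxC
  intro hB
  rcases (hr.2.1 _ _ _).1 (hr.mono_right_s18 hB hcover) with hB' | hB'
  exacts [hfar hB', hBC hB']

theorem rel_union_ppp_iff {A B : Set X} : r B (A ∪ ppp r A) ↔ r B A := by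
  refine ⟨fun hB => ?_, fun hB => hr.mono_right_s18 hB subset_union_left⟩
  rcases (hr.2.1 _ _ _).1 hB with hB' | hB'
  · exact hB'
  · by_contra hBA
    exact hr.not_rel_ppp_of_not_rel hBA hB'

theorem ppp_union_ppp (A : Set X) : ppp r (A ∪ ppp r A) = ppp r A :=
  ext fun _ => hr.rel_union_ppp_iff

theorem ppp_ppp_subset (A : Set X) : ppp r (ppp r A) ⊆ ppp r A := fun _ hx =>
  hr.rel_union_ppp_iff.1 (hr.mono_right_s18 hx subset_union_right)

end IsPrimalProximity

theorem stmt_18_general {X : Type*} (P : Set (Set X)) (r : Set X → Set X → Prop)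
    (hr : IsPrimalProximity P r) (A B : Set X) :
    (¬ r B A ↔ ¬ r B (A ∪ ppp r A)) ∧
    (ppp r A ∪ ppp r (ppp r A) = ppp r A) ∧
    (ppp r A ∪ ppp r (ppp r A) = ppp r (A ∪ ppp r A)) := by
  have hclosed : ppp r A ∪ ppp r (ppp r A) = ppp r A :=
    union_eq_self_of_subset_right (hr.ppp_ppp_subset A)
  refine ⟨not_congr hr.rel_union_ppp_iff.symm, hclosed, ?_⟩
  rw [hclosed, hr.ppp_union_ppp]

theorem stmt_18 {X : Type*} [Nonempty X] (P : Set (Set X)) (r : Set X → Set X → Prop)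
    (hP : IsPrimalOn P) (hr : IsPrimalProximity P r) (A B : Set X) :
    (¬ r B A ↔ ¬ r B (A ∪ ppp r A)) ∧
    (ppp r A ∪ ppp r (ppp r A) = ppp r A) ∧
    (ppp r A ∪ ppp r (ppp r A) = ppp r (A ∪ ppp r A)) :=
  stmt_18_general P r hr A B
end
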